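/- For a positive differentiable function α : [0,T] → (0,∞) with |dα/dt| ≤ C α (1 + |log α|), the function β(t) = log(1 + |log α(t)|) satisfies |β(t) - β(s)| ≤ C'|t - s| for a constant C' depending only on C, and hence 1 + |log α(t)| ≤ e^{C'T}(1 + |log α(s)|) for all s,t ∈ [0,T]. -/

import Mathlib

/-!
Put `L = log α`, so that `|L'| ≤ C (1 + |L|)`. Away from the zeros of `L`, the derivative of
`log (1 + |L|)` is `± L' / (1 + |L|)`, of absolute value at most `C`; the mean value inequality
then gives the Lipschitz bound, and exponentiating it gives the Gronwall-type bound.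
The zeros of `L`, where `|·|` is not differentiable, are handled by replacing `|u|` with
`√(ε² + u²)` and letting `ε → 0`.
-/

open Real Set

noncomputable def smoothLogOneAddAbs (ε u : ℝ) : ℝ := log (1 + √(ε ^ 2 + u ^ 2))

section SmoothLogOneAddAbs

variable {ε : ℝ}

lemma log_one_add_sub_log_one_add_le {a b : ℝ} (hb : 0 ≤ b) (hab : b ≤ a) :
    log (1 + a) - log (1 + b) ≤ a - b := by
  rw [← log_div (by linarith) (by linarith)]
  calc log ((1 + a) / (1 + b)) ≤ (1 + a) / (1 + b) - 1 :=
        log_le_sub_one_of_pos (div_pos (by linarith) (by linarith))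
    _ = (a - b) / (1 + b) := by field_simp; ring
    _ ≤ a - b := div_le_self (by linarith) (by linarith)

lemma abs_smoothLogOneAddAbs_sub_le (hε : 0 ≤ ε) (u : ℝ) :
    |smoothLogOneAddAbs ε u - log (1 + |u|)| ≤ ε := by
  unfold smoothLogOneAddAbs
  have h_lower : |u| ≤ √(ε ^ 2 + u ^ 2) := abs_le_sqrt (by nlinarith)
  have h_upper : √(ε ^ 2 + u ^ 2) ≤ |u| + ε :=
    (sqrt_le_left (by positivity)).2 (by nlinarith [sq_abs u, abs_nonneg u])
  have h_mono : log (1 + |u|) ≤ log (1 + √(ε ^ 2 + u ^ 2)) :=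
    log_le_log (by positivity) (by linarith)
  rw [abs_of_nonneg (sub_nonneg.2 h_mono)]
  linarith [log_one_add_sub_log_one_add_le (abs_nonneg u) h_lower]

lemma exists_hasDerivAt_smoothLogOneAddAbs (hε : 0 < ε) (u : ℝ) :
    ∃ d, HasDerivAt (smoothLogOneAddAbs ε) d u ∧ |d| ≤ (1 + |u|)⁻¹ := by
  set r := √(ε ^ 2 + u ^ 2)
  have hr : 0 < r := sqrt_pos.2 (by positivity)
  have hu : |u| ≤ r := abs_le_sqrt (by nlinarith)
  have hsqrt : HasDerivAt (fun v => √(ε ^ 2 + v ^ 2)) (2 * u / (2 * r)) u := by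
    simpa using ((hasDerivAt_pow 2 u).const_add (ε ^ 2)).sqrt (by positivity)
  refine ⟨2 * u / (2 * r) / (1 + r), (hsqrt.const_add 1).log (by positivity), ?_⟩
  rw [mul_div_mul_left _ _ two_ne_zero, abs_div, abs_div, abs_of_pos hr,
    abs_of_pos (by positivity : 0 < 1 + r)]
  calc |u| / r / (1 + r) ≤ 1 / (1 + r) := by gcongr; exact div_le_one_of_le₀ hu hr.le
    _ ≤ (1 + |u|)⁻¹ := by rw [one_div]; gcongr

end SmoothLogOneAddAbs

theorem abs_log_one_add_abs_sub_le_of_abs_deriv_le {s : Set ℝ} (hs : Convex ℝ s)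
    {L L' : ℝ → ℝ} {C : ℝ} (hL : ∀ x ∈ s, HasDerivWithinAt L (L' x) s x)
    (hbound : ∀ x ∈ s, |L' x| ≤ C * (1 + |L x|)) {x y : ℝ} (hx : x ∈ s) (hy : y ∈ s) :
    |log (1 + |L y|) - log (1 + |L x|)| ≤ C * |y - x| := by
  have smoothed : ∀ ε > 0,
      |smoothLogOneAddAbs ε (L y) - smoothLogOneAddAbs ε (L x)| ≤ C * |y - x| := by
    intro ε hε
    choose d hd hd_le using exists_hasDerivAt_smoothLogOneAddAbs hε
    have hcomp : ∀ z ∈ s, HasDerivWithinAt (fun z => smoothLogOneAddAbs ε (L z))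
        (d (L z) * L' z) s z := fun z hz => (hd (L z)).comp_hasDerivWithinAt z (hL z hz)
    have hcomp_le : ∀ z ∈ s, ‖d (L z) * L' z‖ ≤ C := fun z hz => by
      have h1 : 0 < 1 + |L z| := by positivity
      calc ‖d (L z) * L' z‖ = |d (L z)| * |L' z| := by rw [norm_mul, norm_eq_abs, norm_eq_abs]
        _ ≤ (1 + |L z|)⁻¹ * (C * (1 + |L z|)) :=
          mul_le_mul (hd_le _) (hbound z hz) (abs_nonneg _) (by positivity)
        _ = C := by field_simp
    simpa only [norm_eq_abs] using
      hs.norm_image_sub_le_of_norm_hasDerivWithin_le hcomp hcomp_le hx hy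
  refine le_of_forall_pos_le_add fun δ hδ => ?_
  have hy' := abs_smoothLogOneAddAbs_sub_le (half_pos hδ).le (L y)
  have hx' := abs_smoothLogOneAddAbs_sub_le (half_pos hδ).le (L x)
  have h := smoothed (δ / 2) (half_pos hδ)
  rw [abs_sub_le_iff] at hy' hx' h ⊢
  constructor <;> linarith

lemma le_exp_mul_of_log_sub_le {a b K : ℝ} (ha : 0 < a) (hb : 0 < b) (h : log a - log b ≤ K) :
    a ≤ exp K * b := by
  rwa [← div_le_iff₀ hb, ← log_le_iff_le_exp (div_pos ha hb), log_div ha.ne' hb.ne']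

theorem log_log_lipschitz_of_log_gronwall_general
    (T C : ℝ) (hC : 0 < C)
    (α : ℝ → ℝ)
    (hdiff : ∀ t ∈ Set.Icc (0:ℝ) T, DifferentiableAt ℝ α t)
    (hpos : ∀ t ∈ Set.Icc (0:ℝ) T, 0 < α t)
    (hineq : ∀ t ∈ Set.Icc (0:ℝ) T,
      |deriv α t| ≤ C * α t * (1 + |Real.log (α t)|)) :
    ∃ C' : ℝ, 0 < C' ∧
      (∀ s ∈ Set.Icc (0:ℝ) T, ∀ t ∈ Set.Icc (0:ℝ) T,
        |Real.log (1 + |Real.log (α t)|) - Real.log (1 + |Real.log (α s)|)|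
          ≤ C' * |t - s|) ∧
      (∀ s ∈ Set.Icc (0:ℝ) T, ∀ t ∈ Set.Icc (0:ℝ) T,
        1 + |Real.log (α t)| ≤ Real.exp (C' * T) * (1 + |Real.log (α s)|)) := by
  have hlog : ∀ t ∈ Icc (0:ℝ) T,
      HasDerivWithinAt (fun t => log (α t)) (deriv α t / α t) (Icc 0 T) t :=
    fun t ht => ((hdiff t ht).hasDerivAt.log (hpos t ht).ne').hasDerivWithinAt
  have hbound : ∀ t ∈ Icc (0:ℝ) T, |deriv α t / α t| ≤ C * (1 + |log (α t)|) := by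
    intro t ht
    rw [abs_div, abs_of_pos (hpos t ht), div_le_iff₀ (hpos t ht), mul_right_comm]
    exact hineq t ht
  have lip : ∀ s ∈ Icc (0:ℝ) T, ∀ t ∈ Icc (0:ℝ) T,
      |log (1 + |log (α t)|) - log (1 + |log (α s)|)| ≤ C * |t - s| :=
    fun s hs t ht => abs_log_one_add_abs_sub_le_of_abs_deriv_le (convex_Icc 0 T) hlog hbound hs ht
  refine ⟨C, hC, lip, fun s hs t ht =>
    le_exp_mul_of_log_sub_le (by positivity) (by positivity) ?_⟩
  have hts : |t - s| ≤ T := abs_sub_le_of_nonneg_of_le ht.1 ht.2 hs.1 hs.2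
  exact (le_abs_self _).trans ((lip s hs t ht).trans (mul_le_mul_of_nonneg_left hts hC.le))

/-- If `|α'| ≤ C α (1 + |log α|)`, then `β(t) = log(1 + |log α(t)|)` is Lipschitz
with a constant depending only on `C`, hence
`1 + |log α(t)| ≤ e^{C'T}(1 + |log α(s)|)` for all `s,t ∈ [0,T]`. -/
theorem log_log_lipschitz_of_log_gronwall
    (T C : ℝ) (hT : 0 < T) (hC : 0 < C)
    (α : ℝ → ℝ)
    (hdiff : ∀ t ∈ Set.Icc (0:ℝ) T, DifferentiableAt ℝ α t)
    (hpos : ∀ t ∈ Set.Icc (0:ℝ) T, 0 < α t)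
    (hineq : ∀ t ∈ Set.Icc (0:ℝ) T,
      |deriv α t| ≤ C * α t * (1 + |Real.log (α t)|)) :
    ∃ C' : ℝ, 0 < C' ∧
      (∀ s ∈ Set.Icc (0:ℝ) T, ∀ t ∈ Set.Icc (0:ℝ) T,
        |Real.log (1 + |Real.log (α t)|) - Real.log (1 + |Real.log (α s)|)|
          ≤ C' * |t - s|) ∧
      (∀ s ∈ Set.Icc (0:ℝ) T, ∀ t ∈ Set.Icc (0:ℝ) T,
        1 + |Real.log (α t)| ≤ Real.exp (C' * T) * (1 + |Real.log (α s)|)) :=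
  log_log_lipschitz_of_log_gronwall_general T C hC α hdiff hpos hineq
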